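/- For every pNFA A and every string w ∈ Σ*: if the backtracking run btr_A(w) succeeds, then the sequence of states labeling the rightmost root-to-leaf path of btr_A(w) (with the final leaf label Acc removed) is an accepting run of the NFA Ā corresponding to A on w. -/

import Mathlib

/-! ## Finite ordered trees -/

inductive OTree (α : Type) : Type where
  | node : α → List (OTree α) → OTree α

namespace OTree

/-- Number of nodes of a tree. -/
def size {α : Type} : OTree α → ℕ
  | node _ ts => 1 + (ts.attach.map (fun x => size x.1)).sum
decreasing_by
  have := List.sizeOf_lt_of_mem x.2
  simp only [OTree.node.sizeOf_spec]
  omega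

/-- Does some label in the tree satisfy `p`? -/
def anyLabel {α : Type} (p : α → Bool) : OTree α → Bool
  | node l ts => p l || ts.attach.any (fun x => anyLabel p x.1)
decreasing_by
  have := List.sizeOf_lt_of_mem x.2
  simp only [OTree.node.sizeOf_spec]
  omega

/-- Rank: maximum number of children of a node. -/
def rank {α : Type} : OTree α → ℕ
  | node _ ts => max ts.length ((ts.attach.map (fun x => rank x.1)).foldr max 0)
decreasing_by
  have := List.sizeOf_lt_of_mem x.2
  simp only [OTree.node.sizeOf_spec]
  omega

/-- Root label. -/
def root {α : Type} : OTree α → α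
  | node l _ => l

end OTree

/-! ## Prioritized NFA -/

/-- A prioritized NFA over alphabet `A` with state set `Q`.  `isQ2 q = true` means `q ∈ Q₂`
(the ε-states); `isQ2 q = false` means `q ∈ Q₁`.  `d1` is the (partial) deterministic
transition function on `Q₁`, `d2` the prioritized ε-transition function on `Q₂`
(the list order gives the priorities), `final` the set of final states. -/
structure PNFA (A Q : Type) where
  isQ2 : Q → Bool
  init : Q
  d1 : Q → A → Option Q
  d2 : Q → List Q
  final : Q → Bool

/-- Labels of nodes of backtracking runs: states, `acc` and `rej`. -/
inductive BLab (Q : Type) : Type where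
  | st : Q → BLab Q
  | acc : BLab Q
  | rej : BLab Q

/-- A backtracking run succeeds iff `acc` occurs in it. -/
def OTree.succeeds {Q : Type} (t : OTree (BLab Q)) : Bool :=
  t.anyLabel (fun l => match l with | BLab.acc => true | _ => false)

/-- Keep the children trees up to and including the first succeeding one
(all of them if none succeeds). -/
def firstSucc {Q : Type} : List (OTree (BLab Q)) → List (OTree (BLab Q))
  | [] => []
  | t :: ts => if t.succeeds then [t] else t :: firstSucc ts

/-- Termination measure for ε-recursions. -/
def cMeasure {A Q : Type} [Fintype Q] (M : PNFA A Q) (C : Q → ℕ) : ℕ :=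
  ∑ q : Q, ((M.d2 q).length - min (C q) (M.d2 q).length)

/-- The `(q,w,C)`-backtracking run of the pNFA `M`. -/
def btr {A Q : Type} [DecidableEq Q] [Fintype Q] (M : PNFA A Q) (q : Q) (w : List A)
    (C : Q → ℕ) : OTree (BLab Q) :=
  if M.final q = true ∧ w.isEmpty = true then .node (.st q) [.node .acc []]
  else if M.isQ2 q = true then
    if hik : (M.d2 q).length < C q + 1 then .node (.st q) [.node .rej []]
    else
      .node (.st q) (firstSucc ((List.range' (C q + 1) ((M.d2 q).length - C q)).attach.map
        (fun x => btr M ((M.d2 q)[x.1 - 1]'(by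
            have hx := x.2; rw [List.mem_range'_1] at hx; omega)) w
          (Function.update C q x.1))))
  else
    match w with
    | [] => .node (.st q) [.node .rej []]
    | a :: w' =>
      match M.d1 q a with
      | some q' => .node (.st q) [btr M q' w' (fun _ => 0)]
      | none => .node (.st q) [.node .rej []]
termination_by (w.length, cMeasure M C)
decreasing_by
  · apply Prod.Lex.right
    have hx := x.2; rw [List.mem_range'_1] at hx
    apply Finset.sum_lt_sum
    · intro p _
      by_cases hp : p = q
      · subst hp; simp only [Function.update_self]; omega
      · simp only [Function.update_of_ne hp]; omega
    · exact ⟨q, Finset.mem_univ q, by simp only [Function.update_self]; omega⟩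
  · apply Prod.Lex.left
    simp

/-- The backtracking run of `M` on `w`. -/
def btrW {A Q : Type} [DecidableEq Q] [Fintype Q] (M : PNFA A Q) (w : List A) :
    OTree (BLab Q) :=
  btr M M.init w (fun _ => 0)

/-! ## NFA with ε-transitions -/

/-- An NFA with ε-transitions (`none` plays the role of ε). -/
structure ENFA (A Q : Type) where
  init : Q
  tr : Q → Option A → Set Q
  F : Set Q

namespace ENFA

inductive Steps {A Q : Type} (N : ENFA A Q) : Q → List A → Q → Prop
  | refl (q : Q) : Steps N q [] q
  | eps {p q r : Q} {w : List A} : q ∈ N.tr p none → Steps N q w r → Steps N p w r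
  | sym {p q r : Q} {a : A} {w : List A} :
      q ∈ N.tr p (some a) → Steps N q w r → Steps N p (a :: w) r

/-- The language accepted by the ε-NFA. -/
def Lang {A Q : Type} (N : ENFA A Q) : Set (List A) :=
  {w | ∃ q, q ∈ N.F ∧ N.Steps N.init w q}

end ENFA

/-- The NFA `Ā` corresponding to a pNFA (forget priorities). -/
def PNFA.toENFA {A Q : Type} (M : PNFA A Q) : ENFA A Q where
  init := M.init
  tr q o :=
    match o with
    | some a => if M.isQ2 q then ∅ else {q' | M.d1 q a = some q'}
    | none => if M.isQ2 q then {q' | q' ∈ M.d2 q} else ∅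
  F := {q | M.final q = true}

/-! ## Growth conditions -/

/-- `f` grows exponentially, i.e. `f ∈ 2^{Ω(n)}`. -/
def ExpGrowth (f : ℕ → ℕ) : Prop :=
  ∃ c : ℝ, 1 < c ∧ ∃ N : ℕ, ∀ n ≥ N, c ^ n ≤ (f n : ℝ)

/-- `f(n) = max {|btr_M(w)| : |w| ≤ n}` (the alphabet being finite, the set below is a
nonempty bounded set of naturals, so `sSup` is its maximum). -/
noncomputable def btrMax {A Q : Type} [Fintype A] [DecidableEq Q] [Fintype Q]
    (M : PNFA A Q) (n : ℕ) : ℕ :=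
  sSup {m | ∃ w : List A, w.length ≤ n ∧ m = (btrW M w).size}

/-- `RunFrom N q w ps`: `ps` is (the state sequence of) a run of the ε-NFA `N`
starting in `q`, reading exactly `w`, and `ps` lists all visited states in order. -/
inductive RunFrom {A Q : Type} (N : ENFA A Q) : Q → List A → List Q → Prop
  | last (q : Q) : RunFrom N q [] [q]
  | eps {p q : Q} {w : List A} {ps : List Q} :
      q ∈ N.tr p none → RunFrom N q w ps → RunFrom N p w (p :: ps)
  | sym {p q : Q} {a : A} {w : List A} {ps : List Q} :
      q ∈ N.tr p (some a) → RunFrom N q w ps → RunFrom N p (a :: w) (p :: ps)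

/-- `ps` is an accepting run of `N` on `w`. -/
def AccRun {A Q : Type} (N : ENFA A Q) (w : List A) (ps : List Q) : Prop :=
  RunFrom N N.init w ps ∧ ∃ q ∈ N.F, ps.getLast? = some q

/-- Labels along the rightmost root-to-leaf path of a tree. -/
def rightPath {α : Type} : OTree α → List α
  | .node l ts =>
    match h : ts.getLast? with
    | none => [l]
    | some t => l :: rightPath t
decreasing_by
  have ht : t ∈ ts := by
    obtain ⟨hne, rfl⟩ := List.mem_getLast?_eq_getLast (l := ts) (x := t) h
    exact List.getLast_mem hne
  have := List.sizeOf_lt_of_mem ht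
  simp only [OTree.node.sizeOf_spec]
  omega

/-! Induction along the recursion defining `btr`. The last child of a succeeding node is a
succeeding subtree (the first succeeding ε-alternative, or the unique δ₁-successor), and the
state at its root is an NFA-successor of the node's state, so the rightmost path extends an
accepting run by one step. -/

namespace OTree

variable {Q : Type}

theorem succeeds_node_iff (l : BLab Q) (ts : List (OTree (BLab Q))) :
    (node l ts).succeeds = true ↔ l = .acc ∨ ∃ t ∈ ts, t.succeeds = true := by
  rw [succeeds, anyLabel]
  cases l <;> simp [succeeds]

theorem not_succeeds_rej (q : Q) : (node (.st q) [node .rej []]).succeeds ≠ true := by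
  simp [succeeds_node_iff]

end OTree

theorem exists_getLast?_firstSucc {Q : Type} {L : List (OTree (BLab Q))}
    (h : ∃ t ∈ firstSucc L, t.succeeds = true) :
    ∃ t ∈ L, t.succeeds = true ∧ (firstSucc L).getLast? = some t := by
  induction L with
  | nil => simp [firstSucc] at h
  | cons a l ih =>
    by_cases ha : a.succeeds = true
    · exact ⟨a, List.mem_cons_self, ha, by simp [firstSucc, ha]⟩
    · simp only [firstSucc, ha, if_false, Bool.false_eq_true, List.mem_cons,
        exists_eq_or_imp, false_and, false_or] at h ⊢
      obtain ⟨t, ht, hts, hlast⟩ := ih h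
      exact ⟨t, ht, hts, by simp [List.getLast?_cons, hlast]⟩

theorem rightPath_node_of_getLast? {α : Type} {l : α} {ts : List (OTree α)} {t : OTree α}
    (h : ts.getLast? = some t) : rightPath (.node l ts) = l :: rightPath t := by
  rw [rightPath]
  split <;> simp_all

def RightPathAccepts {A Q : Type} (N : ENFA A Q) (q : Q) (w : List A) (t : OTree (BLab Q)) :
    Prop :=
  ∃ ps : List Q, rightPath t = ps.map BLab.st ++ [BLab.acc] ∧ RunFrom N q w ps ∧
    ∃ qf ∈ N.F, ps.getLast? = some qf

namespace RightPathAccepts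

variable {A Q : Type} {N : ENFA A Q}

theorem acc_leaf {q : Q} (hq : q ∈ N.F) :
    RightPathAccepts N q [] (.node (.st q) [.node .acc []]) :=
  ⟨[q], by simp [rightPath_node_of_getLast?, rightPath], .last q, q, hq, rfl⟩

theorem node {q q' : Q} {w w' : List A} {ts : List (OTree (BLab Q))} {t : OTree (BLab Q)}
    (hlast : ts.getLast? = some t) (ht : RightPathAccepts N q' w' t)
    (hstep : ∀ ps, RunFrom N q' w' ps → RunFrom N q w (q :: ps)) :
    RightPathAccepts N q w (.node (.st q) ts) := by
  obtain ⟨ps, hpath, hrun, qf, hqf, hps⟩ := ht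
  exact ⟨q :: ps, by simp [rightPath_node_of_getLast? hlast, hpath], hstep ps hrun, qf, hqf,
    by simp [List.getLast?_cons, hps]⟩

end RightPathAccepts

theorem rightPathAccepts_btr {A Q : Type} [DecidableEq Q] [Fintype Q] (M : PNFA A Q) (q : Q)
    (w : List A) (C : Q → ℕ) (h : (btr M q w C).succeeds = true) :
    RightPathAccepts M.toENFA q w (btr M q w C) := by
  fun_induction btr M q w C with
  | case1 q w C hfin =>
    obtain ⟨hq, hw⟩ := hfin
    rw [List.isEmpty_iff.mp hw]
    exact RightPathAccepts.acc_leaf hq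
  | case2 q =>
    exact absurd h (OTree.not_succeeds_rej q)
  | case3 q _ _ _ hq2 _ ih =>
    obtain ⟨t, ht, hts, hlast⟩ :=
      exists_getLast?_firstSucc (by simpa [OTree.succeeds_node_iff] using h)
    obtain ⟨x, -, rfl⟩ := List.mem_map.mp ht
    exact .node hlast (ih x hts) fun _ =>
      RunFrom.eps (by simp [PNFA.toENFA, hq2])
  | case4 q =>
    exact absurd h (OTree.not_succeeds_rej q)
  | case5 q _ hq1 _ w' q' hd _ ih =>
    have hsucc : (btr M q' w' fun _ => 0).succeeds = true := by
      simpa [OTree.succeeds_node_iff] using h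
    exact .node rfl (ih hsucc) fun _ => RunFrom.sym (by simp [PNFA.toENFA, hq1, hd])
  | case6 q =>
    exact absurd h (OTree.not_succeeds_rej q)

/-- If the backtracking run of `A` on `w` succeeds, then the sequence of
states labeling its rightmost root-to-leaf path (with the final leaf label `Acc` removed)
is an accepting run of the NFA `Ā` on `w`. -/
theorem statement3 {A Q : Type} [DecidableEq Q] [Fintype Q] (M : PNFA A Q) (w : List A)
    (h : (btrW M w).succeeds = true) :
    ∃ ps : List Q,
      rightPath (btrW M w) = ps.map BLab.st ++ [BLab.acc] ∧
      AccRun M.toENFA w ps := by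
  exact rightPathAccepts_btr M M.init w (fun _ => 0) h
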